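/- The group Γ_g(2m,4m) = {γ ∈ Γ_g(2m) : diag(B) ≡ diag(C) ≡ 0 (mod 4m)} is a normal subgroup of Sp(2g,ℤ). -/
import Mathlib


open Matrix Finset

namespace Gamma24

lemma pair_dvd {ι : Type*} [Fintype ι] [DecidableEq ι] (π : ι → ℕ) (hπ : Function.Injective π)
    (D : ℤ) (f : ι → ι → ℤ) (hdiag : ∀ a, D ∣ f a a) (hpair : ∀ a b, D ∣ f a b + f b a) :
    D ∣ ∑ a, ∑ b, f a b := by
  classical
  have h1 : ∑ a, ∑ b, f a b = ∑ p ∈ Finset.univ ×ˢ Finset.univ, f p.1 p.2 := by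
    rw [Finset.sum_product]
  rw [h1, ← Finset.sum_filter_add_sum_filter_not (Finset.univ ×ˢ Finset.univ)
      (fun p => π p.1 < π p.2) (fun p => f p.1 p.2),
      ← Finset.sum_filter_add_sum_filter_not
        ((Finset.univ ×ˢ Finset.univ).filter (fun p => ¬ π p.1 < π p.2))
        (fun p => π p.2 < π p.1) (fun p => f p.1 p.2), ← add_assoc]
  apply dvd_add
  · have hswap : ∑ p ∈ ((Finset.univ ×ˢ Finset.univ).filter (fun p => ¬ π p.1 < π p.2)).filter
        (fun p => π p.2 < π p.1), f p.1 p.2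
        = ∑ p ∈ (Finset.univ ×ˢ Finset.univ).filter (fun p => π p.1 < π p.2), f p.2 p.1 := by
      apply Finset.sum_nbij' (fun p => Prod.swap p) (fun p => Prod.swap p) <;>
        simp +contextual [lt_asymm, le_of_lt]
    rw [hswap, ← Finset.sum_add_distrib]
    exact Finset.dvd_sum fun p _ => hpair p.1 p.2
  · refine Finset.dvd_sum fun p hp => ?_
    simp only [Finset.mem_filter] at hp
    have : p.1 = p.2 := hπ (le_antisymm (not_lt.mp hp.2) (not_lt.mp hp.1.2))
    rw [this]; exact hdiag p.2

variable {g : ℕ}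

local notation "SpM" => Matrix (Fin g ⊕ Fin g) (Fin g ⊕ Fin g) ℤ
local notation "Sp" => Matrix.symplecticGroup (Fin g) ℤ
local notation "JJ" => Matrix.J (Fin g) ℤ

lemma pi_inj : Function.Injective
    (Sum.elim (fun i : Fin g => (i : ℕ)) (fun i : Fin g => g + (i : ℕ))) := by
  rintro (a | a) (b | b) h
  · exact congrArg _ (Fin.ext h)
  · exact absurd h (by have := a.isLt; simp; omega)
  · exact absurd h (by have := b.isLt; simp; omega)
  · exact congrArg _ (Fin.ext (by simpa using h))

/-- quadratic form of a matrix -/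
def qf (M : SpM) (x : Fin g ⊕ Fin g → ℤ) : ℤ := x ⬝ᵥ (M *ᵥ x)

lemma qf_eq_sum (M : SpM) (x) : qf M x = ∑ a, ∑ b, x a * (M a b * x b) := by
  simp [qf, dotProduct, mulVec, Finset.mul_sum, mul_add]

lemma qf_add (M N : SpM) (x) : qf (M + N) x = qf M x + qf N x := by
  simp [qf, Matrix.add_mulVec, dotProduct_add]

lemma qf_neg (M : SpM) (x) : qf (-M) x = -qf M x := by
  simp [qf, Matrix.neg_mulVec, dotProduct_neg]

lemma qf_sub (M N : SpM) (x) : qf (M - N) x = qf M x - qf N x := by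
  simp [qf, Matrix.sub_mulVec, dotProduct_sub]

lemma dvd_qf {d : ℤ} {M : SpM} (h : ∀ i j, d ∣ M i j) (x) : d ∣ qf M x := by
  rw [qf_eq_sum]
  exact Finset.dvd_sum fun a _ => Finset.dvd_sum fun b _ => ((h a b).mul_right _).mul_left _

lemma dvd_qf_of_diag {D : ℤ} {M : SpM}
    (hdiag : ∀ a, D ∣ M a a) (hsymm : ∀ a b, D ∣ M a b + M b a) (x) : D ∣ qf M x := by
  rw [qf_eq_sum]
  refine pair_dvd _ pi_inj D _ (fun a => ((hdiag a).mul_right _).mul_left _) (fun a b => ?_)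
  have h2 : x a * (M a b * x b) + x b * (M b a * x a) = (M a b + M b a) * (x a * x b) := by ring
  rw [h2]; exact (hsymm a b).mul_right _

lemma qf_single (M : SpM) (k) : qf M (Pi.single k 1) = M k k := by
  rw [qf_eq_sum]
  simp [Pi.single_apply]

lemma qf_conj (Q M : SpM) (x) : qf (Qᵀ * M * Q) x = qf M (Q *ᵥ x) := by
  unfold qf
  rw [← Matrix.mulVec_mulVec, ← Matrix.mulVec_mulVec, Matrix.dotProduct_mulVec,
    Matrix.vecMul_transpose]

lemma dvd_mul_ent_left {d : ℤ} {M N : SpM} (h : ∀ i j, d ∣ N i j) (i j) : d ∣ (M * N) i j := by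
  rw [Matrix.mul_apply]; exact Finset.dvd_sum fun k _ => (h k j).mul_left _

lemma dvd_mul_ent_right {d : ℤ} {M N : SpM} (h : ∀ i j, d ∣ M i j) (i j) : d ∣ (M * N) i j := by
  rw [Matrix.mul_apply]; exact Finset.dvd_sum fun k _ => (h i k).mul_right _

lemma dvd_mul_ent_both {d e : ℤ} {M N : SpM} (hM : ∀ i j, d ∣ M i j) (hN : ∀ i j, e ∣ N i j)
    (i j) : d * e ∣ (M * N) i j := by
  rw [Matrix.mul_apply]; exact Finset.dvd_sum fun k _ => mul_dvd_mul (hM i k) (hN k j)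

lemma J_mul_apply_inl (M : SpM) (a j) : (JJ * M) (Sum.inl a) j = -M (Sum.inr a) j := by
  rw [Matrix.mul_apply, Fintype.sum_sum_type]
  simp [Matrix.J, Matrix.one_apply, ite_mul]

lemma J_mul_apply_inr (M : SpM) (a j) : (JJ * M) (Sum.inr a) j = M (Sum.inl a) j := by
  rw [Matrix.mul_apply, Fintype.sum_sum_type]
  simp [Matrix.J, Matrix.one_apply, ite_mul]

lemma coe_mul_inv (σ : Sp) : (σ : SpM) * ((σ⁻¹ : Sp) : SpM) = 1 :=
  congrArg (Subtype.val) (mul_inv_cancel σ)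

lemma inv_coe_mul (σ : Sp) : ((σ⁻¹ : Sp) : SpM) * (σ : SpM) = 1 :=
  congrArg (Subtype.val) (inv_mul_cancel σ)

lemma J_mul_coe (σ : Sp) : JJ * (σ : SpM) = ((σ⁻¹ : Sp) : SpM)ᵀ * JJ := by
  rw [SymplecticGroup.coe_inv]
  simp only [Matrix.transpose_mul, Matrix.transpose_neg, Matrix.J_transpose,
    Matrix.transpose_transpose, Matrix.neg_mul, Matrix.mul_neg, neg_neg, Matrix.mul_assoc,
    Matrix.J_squared, Matrix.mul_one]

lemma transpose_J_eq (γ : Sp) : (γ : SpM)ᵀ * JJ = JJ * ((γ⁻¹ : Sp) : SpM) := by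
  have h := SymplecticGroup.mem_iff'.mp γ.2
  have h2 := congrArg (fun X : SpM => X * ((γ⁻¹ : Sp) : SpM)) h
  simpa [Matrix.mul_assoc, coe_mul_inv γ] using h2

lemma mul_sub_one (γ δ : Sp) :
    ((γ * δ : Sp) : SpM) - 1 = ((γ : SpM) - 1) + ((δ : SpM) - 1)
      + ((γ : SpM) - 1) * ((δ : SpM) - 1) := by
  have hc : ((γ * δ : Sp) : SpM) = (γ : SpM) * (δ : SpM) := rfl
  rw [hc]; noncomm_ring

lemma inv_sub_one (γ : Sp) :
    ((γ⁻¹ : Sp) : SpM) - 1 = -(((γ⁻¹ : Sp) : SpM) * ((γ : SpM) - 1)) := by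
  rw [Matrix.mul_sub, Matrix.mul_one, inv_coe_mul γ, neg_sub]

lemma inv_sub_one' (γ : Sp) :
    ((γ⁻¹ : Sp) : SpM) - 1 = -((γ : SpM) - 1) - (((γ⁻¹ : Sp) : SpM) - 1) * ((γ : SpM) - 1) := by
  have h : (((γ⁻¹ : Sp) : SpM) - 1) * ((γ : SpM) - 1)
      = (((γ⁻¹ : Sp) : SpM) * (γ : SpM)) - ((γ⁻¹ : Sp) : SpM) - (γ : SpM) + 1 := by noncomm_ring
  rw [h, inv_coe_mul γ]; abel

lemma sub_inv (γ : Sp) :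
    (γ : SpM) - ((γ⁻¹ : Sp) : SpM) = ((γ : SpM) - 1) + ((γ : SpM) - 1)
      + (((γ⁻¹ : Sp) : SpM) - 1) * ((γ : SpM) - 1) := by
  have h1 : (γ : SpM) - ((γ⁻¹ : Sp) : SpM)
      = ((γ : SpM) - 1) - (((γ⁻¹ : Sp) : SpM) - 1) := by abel
  conv_lhs => rw [h1, inv_sub_one' γ]
  abel

lemma conj_sub_one (σ γ : Sp) :
    ((σ * γ * σ⁻¹ : Sp) : SpM) - 1 = (σ : SpM) * ((γ : SpM) - 1) * ((σ⁻¹ : Sp) : SpM) := by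
  have hc : ((σ * γ * σ⁻¹ : Sp) : SpM) = (σ : SpM) * (γ : SpM) * ((σ⁻¹ : Sp) : SpM) := rfl
  rw [hc, Matrix.mul_sub, Matrix.mul_one, Matrix.sub_mul, coe_mul_inv σ]

/-- The auxiliary predicate defining `Γ_g(2m, 4m)`. -/
def P (m : ℕ) (γ : Sp) : Prop :=
  (∀ i j, ((2 * m : ℕ) : ℤ) ∣ ((γ : SpM) - 1) i j) ∧
  ∀ x : Fin g ⊕ Fin g → ℤ, ((4 * m : ℕ) : ℤ) ∣ qf (JJ * ((γ : SpM) - 1)) x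

lemma hDN (m : ℕ) : ((4 * m : ℕ) : ℤ) = 2 * ((2 * m : ℕ) : ℤ) := by push_cast; ring

lemma hDNN (m : ℕ) : ((4 * m : ℕ) : ℤ) ∣ ((2 * m : ℕ) : ℤ) * ((2 * m : ℕ) : ℤ) :=
  ⟨m, by push_cast; ring⟩

lemma P_one (m : ℕ) : P m (1 : Sp) := by
  have h1 : ((1 : Sp) : SpM) = 1 := rfl
  constructor
  · intro i j; simp [h1]
  · intro x; simp [h1, qf]

lemma P_mul {m : ℕ} {γ δ : Sp} (hγ : P m γ) (hδ : P m δ) : P m (γ * δ) := by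
  obtain ⟨hγ1, hγ2⟩ := hγ
  obtain ⟨hδ1, hδ2⟩ := hδ
  constructor
  · intro i j
    rw [mul_sub_one]
    simp only [Matrix.add_apply]
    exact dvd_add (dvd_add (hγ1 i j) (hδ1 i j)) (dvd_mul_ent_left hδ1 i j)
  · intro x
    rw [mul_sub_one, Matrix.mul_add, Matrix.mul_add, qf_add, qf_add]
    refine dvd_add (dvd_add (hγ2 x) (hδ2 x)) ?_
    have h : ∀ i j, (((2 * m : ℕ) : ℤ) * ((2 * m : ℕ) : ℤ))
        ∣ (JJ * (((γ : SpM) - 1) * ((δ : SpM) - 1))) i j := by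
      intro i j
      rw [← Matrix.mul_assoc]
      exact dvd_mul_ent_both (fun i j => dvd_mul_ent_left hγ1 i j) hδ1 i j
    exact (hDNN m).trans (dvd_qf h x)

lemma P_inv {m : ℕ} {γ : Sp} (hγ : P m γ) : P m γ⁻¹ := by
  obtain ⟨h1, h2⟩ := hγ
  have hC : ∀ i j, ((2 * m : ℕ) : ℤ) ∣ (((γ⁻¹ : Sp) : SpM) - 1) i j := by
    intro i j
    rw [inv_sub_one]
    simp only [Matrix.neg_apply, dvd_neg]
    exact dvd_mul_ent_left h1 i j
  refine ⟨hC, fun x => ?_⟩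
  rw [inv_sub_one' γ, Matrix.mul_sub, Matrix.mul_neg, qf_sub, qf_neg]
  refine dvd_sub ((dvd_neg).mpr (h2 x)) ?_
  have h : ∀ i j, (((2 * m : ℕ) : ℤ) * ((2 * m : ℕ) : ℤ))
      ∣ (JJ * ((((γ⁻¹ : Sp) : SpM) - 1) * ((γ : SpM) - 1))) i j := by
    intro i j
    rw [← Matrix.mul_assoc]
    exact dvd_mul_ent_both (fun i j => dvd_mul_ent_left hC i j) h1 i j
  exact (hDNN m).trans (dvd_qf h x)

lemma P_conj {m : ℕ} (σ : Sp) {γ : Sp} (hγ : P m γ) : P m (σ * γ * σ⁻¹) := by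
  obtain ⟨h1, h2⟩ := hγ
  constructor
  · intro i j
    rw [conj_sub_one]
    exact dvd_mul_ent_right (fun i j => dvd_mul_ent_left h1 i j) i j
  · intro x
    have key : JJ * (((σ * γ * σ⁻¹ : Sp) : SpM) - 1)
        = ((σ⁻¹ : Sp) : SpM)ᵀ * (JJ * ((γ : SpM) - 1)) * ((σ⁻¹ : Sp) : SpM) := by
      rw [conj_sub_one, ← Matrix.mul_assoc, ← Matrix.mul_assoc, J_mul_coe σ]
      simp only [Matrix.mul_assoc]
    rw [key, qf_conj]
    exact h2 _

lemma P_iff (m : ℕ) (γ : Sp) :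
    P m γ ↔
      ((∀ i j, ((2 * m : ℕ) : ℤ) ∣ ((γ : SpM) i j - (1 : SpM) i j)) ∧
       (∀ i, ((4 * m : ℕ) : ℤ) ∣ (γ : SpM) (Sum.inl i) (Sum.inr i)) ∧
       (∀ i, ((4 * m : ℕ) : ℤ) ∣ (γ : SpM) (Sum.inr i) (Sum.inl i))) := by
  constructor
  · rintro ⟨h1, h2⟩
    refine ⟨fun i j => by simpa [Matrix.sub_apply] using h1 i j, fun i => ?_, fun i => ?_⟩
    · have h := h2 (Pi.single (Sum.inr i) 1)
      rw [qf_single, J_mul_apply_inr] at h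
      simpa [Matrix.sub_apply, Matrix.one_apply] using h
    · have h := h2 (Pi.single (Sum.inl i) 1)
      rw [qf_single, J_mul_apply_inl, dvd_neg] at h
      simpa [Matrix.sub_apply, Matrix.one_apply] using h
  · rintro ⟨h1, hB, hC⟩
    have h1' : ∀ i j, ((2 * m : ℕ) : ℤ) ∣ ((γ : SpM) - 1) i j := fun i j => by
      simpa [Matrix.sub_apply] using h1 i j
    refine ⟨h1', fun x => dvd_qf_of_diag ?_ ?_ x⟩
    · rintro (a | a)
      · rw [J_mul_apply_inl, dvd_neg]
        simpa [Matrix.sub_apply, Matrix.one_apply] using hC a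
      · rw [J_mul_apply_inr]
        simpa [Matrix.sub_apply, Matrix.one_apply] using hB a
    · intro a b
      have e : JJ * ((γ : SpM) - 1) + (JJ * ((γ : SpM) - 1))ᵀ
          = JJ * ((γ : SpM) - ((γ⁻¹ : Sp) : SpM)) := by
        rw [Matrix.transpose_mul, Matrix.J_transpose, Matrix.transpose_sub,
          Matrix.transpose_one, Matrix.mul_neg, Matrix.sub_mul, Matrix.one_mul,
          transpose_J_eq γ, Matrix.mul_sub, Matrix.mul_sub, Matrix.mul_one]
        abel
      have e2 := congrArg (fun X : SpM => X a b) e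
      simp only [Matrix.add_apply, Matrix.transpose_apply] at e2
      rw [e2]
      have hC' : ∀ i j, ((2 * m : ℕ) : ℤ) ∣ (((γ⁻¹ : Sp) : SpM) - 1) i j := by
        intro i j
        rw [inv_sub_one]
        simp only [Matrix.neg_apply, dvd_neg]
        exact dvd_mul_ent_left h1' i j
      have hent : ∀ i j, ((4 * m : ℕ) : ℤ) ∣ ((γ : SpM) - ((γ⁻¹ : Sp) : SpM)) i j := by
        intro i j
        rw [sub_inv γ]
        simp only [Matrix.add_apply]
        rw [← two_mul]
        refine dvd_add ?_ ((hDNN m).trans (dvd_mul_ent_both hC' h1' i j))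
        rw [hDN m]
        exact mul_dvd_mul_left 2 (h1' i j)
      exact dvd_mul_ent_left hent a b

end Gamma24

/-- Γ_g(2m,4m) = {γ ∈ Γ_g(2m) : diag(B) ≡ diag(C) ≡ 0 (mod 4m)} is a
normal subgroup of Sp(2g,ℤ). -/
theorem gamma_2m_4m_normal (g m : ℕ) (hm : 1 ≤ m) :
    ∃ H : Subgroup (Matrix.symplecticGroup (Fin g) ℤ),
      ((H : Set (Matrix.symplecticGroup (Fin g) ℤ)) =
        {γ : Matrix.symplecticGroup (Fin g) ℤ |
             (∀ i j, ((2 * m : ℕ) : ℤ) ∣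
                ((γ : Matrix (Fin g ⊕ Fin g) (Fin g ⊕ Fin g) ℤ) i j
                  - (1 : Matrix (Fin g ⊕ Fin g) (Fin g ⊕ Fin g) ℤ) i j)) ∧
             (∀ i, ((4 * m : ℕ) : ℤ) ∣
                (γ : Matrix (Fin g ⊕ Fin g) (Fin g ⊕ Fin g) ℤ) (Sum.inl i) (Sum.inr i)) ∧
             (∀ i, ((4 * m : ℕ) : ℤ) ∣
                (γ : Matrix (Fin g ⊕ Fin g) (Fin g ⊕ Fin g) ℤ) (Sum.inr i) (Sum.inl i))}) ∧
      H.Normal := by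
  refine ⟨{ carrier := {γ | Gamma24.P m γ},
            one_mem' := Gamma24.P_one m,
            mul_mem' := fun ha hb => Gamma24.P_mul ha hb,
            inv_mem' := fun ha => Gamma24.P_inv ha }, ?_, ?_⟩
  · ext γ
    exact Gamma24.P_iff m γ
  · exact ⟨fun γ hγ σ => Gamma24.P_conj σ hγ⟩
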